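/- Let $C, D$ be nonempty compact convex subsets of $\mathbb{R}^q$. Then $(C \oplus D) \ominus D = C$, where $\oplus$ is Minkowski sum and $C \ominus D = \{x : \{x\} \oplus D \subseteq C\}$ is the Minkowski difference. -/

import Mathlib

open Filter Topology Pointwise

/-- Painlevé–Kuratowski inner limit of a sequence of sets. -/
def innerLim {E : Type*} [MetricSpace E] (C : ℕ → Set E) : Set E :=
  {x | ∃ u : ℕ → E, (∀ n, u n ∈ C n) ∧ Tendsto u atTop (nhds x)}

/-- Painlevé–Kuratowski outer limit of a sequence of sets. -/
def outerLim {E : Type*} [MetricSpace E] (C : ℕ → Set E) : Set E :=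
  {x | ∃ φ : ℕ → ℕ, StrictMono φ ∧ ∃ u : ℕ → E, (∀ n, u n ∈ C (φ n)) ∧ Tendsto u atTop (nhds x)}

/-- Minkowski difference of two sets. -/
def minkDiff {q : ℕ} (A B : Set (EuclideanSpace ℝ (Fin q))) : Set (EuclideanSpace ℝ (Fin q)) :=
  {x | ∀ d ∈ B, x + d ∈ A}

/-! If `x + D ⊆ C + D`, then `x` cannot be strictly separated from `C`: test the separating
functional `f` at a maximiser `d₀` of `f` on `D`; writing `x + d₀ = c + d` gives
`f x = f c + (f d - f d₀) ≤ f c`. Hence `x ∈ C` when `C` is closed and convex. -/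

lemma exists_apply_le_of_add_mem_add_of_isMaxOn {E 𝓕 : Type*} [AddCommMonoid E]
    [FunLike 𝓕 E ℝ] [AddMonoidHomClass 𝓕 E ℝ] {f : 𝓕} {C D : Set E} {x d₀ : E}
    (hmax : IsMaxOn f D d₀) (hx : x + d₀ ∈ C + D) : ∃ c ∈ C, f x ≤ f c := by
  obtain ⟨c, hc, d, hd, hcd⟩ := Set.mem_add.mp hx
  have hsum : f x + f d₀ = f c + f d := by rw [← map_add, ← map_add, hcd]
  exact ⟨c, hc, by linarith [show f d ≤ f d₀ from hmax hd]⟩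

lemma mem_of_forall_add_mem_add {E : Type*} [AddCommGroup E] [Module ℝ E] [TopologicalSpace E]
    [IsTopologicalAddGroup E] [ContinuousSMul ℝ E] [LocallyConvexSpace ℝ E] {C D : Set E}
    (hCconv : Convex ℝ C) (hCclosed : IsClosed C) (hDc : IsCompact D) (hDne : D.Nonempty)
    {x : E} (hx : ∀ d ∈ D, x + d ∈ C + D) : x ∈ C := by
  by_contra hxC
  obtain ⟨f, u, hfC, hux⟩ := geometric_hahn_banach_closed_point hCconv hCclosed hxC
  obtain ⟨d₀, hd₀, hmax⟩ := hDc.exists_isMaxOn hDne f.continuous.continuousOn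
  obtain ⟨c, hc, hle⟩ := exists_apply_le_of_add_mem_add_of_isMaxOn hmax (hx d₀ hd₀)
  linarith [hfC c hc]

theorem minkDiff_minkowski_sum_cancel_general {q : ℕ} (C D : Set (EuclideanSpace ℝ (Fin q)))
    (hDne : D.Nonempty)
    (hCc : IsCompact C) (hDc : IsCompact D)
    (hCconv : Convex ℝ C) :
    minkDiff (C + D) D = C :=
  Set.Subset.antisymm
    (fun _ hx ↦ mem_of_forall_add_mem_add hCconv hCc.isClosed hDc hDne hx)
    (fun _ hx _ hd ↦ Set.add_mem_add hx hd)

/-- For compact convex sets, the Minkowski difference inverts the Minkowski sum. -/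
theorem minkDiff_minkowski_sum_cancel {q : ℕ} (C D : Set (EuclideanSpace ℝ (Fin q)))
    (hCne : C.Nonempty) (hDne : D.Nonempty)
    (hCc : IsCompact C) (hDc : IsCompact D)
    (hCconv : Convex ℝ C) (hDconv : Convex ℝ D) :
    minkDiff (C + D) D = C :=
  minkDiff_minkowski_sum_cancel_general C D hDne hCc hDc hCconv
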